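/- Every door gadget (whether its opening mechanism is a tunnel or a port, and whether each tunnel is directed or undirected) can simulate its corresponding open-optional door, i.e., the door obtained by replacing its opening tunnel with a single opening port: wiring one end of the opening tunnel to the other end and attaching the external connection to a point on this loop yields a system whose external behavior between ports realizes exactly the transitive closure of the open-optional door. -/

import Mathlib

/-- A 1-player gadget: a finite set of states, a finite set of locations,
and a set of traversals between state–location pairs. -/
structure Gadget where
  State : Type
  Loc : Type
  stateFin : Fintype State
  locFin : Fintype Loc
  trav : (State × Loc) → (State × Loc) → Prop

open Classical in
/-- Update the state of one gadget instance in a global state. -/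
noncomputable def updState {ι St : Type} (σg : ι → St) (i : ι) (s : St) : ι → St :=
  fun j => if j = i then s else σg j

/-- A system of copies of the gadget `G`: a finite collection of instances together with
symmetric connections (pairings of locations) along which the agent moves freely. -/
structure System (G : Gadget) where
  ι : Type
  instFin : Fintype ι
  conn : (ι × G.Loc) → (ι × G.Loc) → Prop
  conn_symm : ∀ x y, conn x y → conn y x

/-- A single move of the agent in a system: a traversal inside one instance
(changing only that instance's state), or a free move along a connection. -/
inductive SysStep (G : Gadget) (S : System G) :
    ((S.ι → G.State) × (S.ι × G.Loc)) → ((S.ι → G.State) × (S.ι × G.Loc)) → Prop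
  | trav {σg : S.ι → G.State} {i : S.ι} {a b : G.Loc} {s' : G.State} :
      G.trav (σg i, a) (s', b) →
      SysStep G S (σg, (i, a)) (updState σg i s', (i, b))
  | move {σg : S.ι → G.State} {x y : S.ι × G.Loc} :
      S.conn x y → SysStep G S (σg, x) (σg, y)

/-- `Simulates G' G` : there is a system of copies of `G'`, with external locations
identified (injectively) with the locations of `G` and an injective encoding of the
states of `G` as global states, whose reachability behavior between external locations
in encoded global states is exactly the transitive closure of `G`. -/
def Simulates (G' G : Gadget) : Prop :=
  ∃ S : System G', ∃ ext : G.Loc → S.ι × G'.Loc, ∃ enc : G.State → (S.ι → G'.State),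
    Function.Injective ext ∧ Function.Injective enc ∧
    ∀ s s' a b,
      Relation.ReflTransGen (SysStep G' S) (enc s, ext a) (enc s', ext b) ↔
      Relation.ReflTransGen G.trav (s, a) (s', b)

/-! ### Doors.  State `true` = open, `false` = closed.
A direction flag `true` means the corresponding tunnel is directed,
`false` that it is undirected. -/

/-- Locations of a door with an opening tunnel: entrance/exit of the opening (`O`),
traverse (`T`) and closing (`C`) tunnels. -/
inductive DoorLoc | O0 | O1 | T0 | T1 | C0 | C1
deriving DecidableEq

instance : Fintype DoorLoc :=
  Fintype.ofList [DoorLoc.O0, DoorLoc.O1, DoorLoc.T0, DoorLoc.T1, DoorLoc.C0, DoorLoc.C1] (by intro x; cases x <;> decide)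

/-- Traversals of a door with an opening tunnel; `dO`, `dT`, `dC` record whether the
opening, traverse, closing tunnels are directed. -/
def doorTrav (dO dT dC : Bool) : (Bool × DoorLoc) → (Bool × DoorLoc) → Prop := fun x y =>
  (x.2 = DoorLoc.O0 ∧ y = (true, DoorLoc.O1)) ∨
  (dO = false ∧ x.2 = DoorLoc.O1 ∧ y = (true, DoorLoc.O0)) ∨
  (x.1 = true ∧ x.2 = DoorLoc.T0 ∧ y = (true, DoorLoc.T1)) ∨
  (dT = false ∧ x.1 = true ∧ x.2 = DoorLoc.T1 ∧ y = (true, DoorLoc.T0)) ∨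
  (x.2 = DoorLoc.C0 ∧ y = (false, DoorLoc.C1)) ∨
  (dC = false ∧ x.2 = DoorLoc.C1 ∧ y = (false, DoorLoc.C0))

/-- The door with an opening tunnel (an open-required door). -/
def doorGadget (dO dT dC : Bool) : Gadget :=
  ⟨Bool, DoorLoc, inferInstance, inferInstance, doorTrav dO dT dC⟩

/-- Locations of an open-optional door: opening port `O` plus traverse and closing tunnels. -/
inductive ODoorLoc | O | T0 | T1 | C0 | C1
deriving DecidableEq

instance : Fintype ODoorLoc :=
  Fintype.ofList [ODoorLoc.O, ODoorLoc.T0, ODoorLoc.T1, ODoorLoc.C0, ODoorLoc.C1] (by intro x; cases x <;> decide)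

/-- Traversals of an open-optional door: a visit to the opening port `O` sets the state
to open; `dT`, `dC` record whether the traverse and closing tunnels are directed. -/
def openOptDoorTrav (dT dC : Bool) : (Bool × ODoorLoc) → (Bool × ODoorLoc) → Prop := fun x y =>
  (x.2 = ODoorLoc.O ∧ y = (true, ODoorLoc.O)) ∨
  (x.1 = true ∧ x.2 = ODoorLoc.T0 ∧ y = (true, ODoorLoc.T1)) ∨
  (dT = false ∧ x.1 = true ∧ x.2 = ODoorLoc.T1 ∧ y = (true, ODoorLoc.T0)) ∨
  (x.2 = ODoorLoc.C0 ∧ y = (false, ODoorLoc.C1)) ∨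
  (dC = false ∧ x.2 = ODoorLoc.C1 ∧ y = (false, ODoorLoc.C0))

/-- The open-optional door. -/
def openOptDoorGadget (dT dC : Bool) : Gadget :=
  ⟨Bool, ODoorLoc, inferInstance, inferInstance, openOptDoorTrav dT dC⟩

/-- A diode: a 1-state gadget with one always-traversable directed tunnel. -/
inductive DiodeLoc | inp | out
deriving DecidableEq

instance : Fintype DiodeLoc :=
  Fintype.ofList [DiodeLoc.inp, DiodeLoc.out] (by intro x; cases x <;> decide)

def diode : Gadget :=
  ⟨Unit, DiodeLoc, inferInstance, inferInstance,
    fun x y => x.2 = DiodeLoc.inp ∧ y.2 = DiodeLoc.out⟩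

/-- Locations of an open-required normal self-closing door. -/
inductive SCDLoc | O0 | O1 | T0 | T1
deriving DecidableEq

instance : Fintype SCDLoc :=
  Fintype.ofList [SCDLoc.O0, SCDLoc.O1, SCDLoc.T0, SCDLoc.T1] (by intro x; cases x <;> decide)

/-- Open-required normal self-closing door: opening tunnel `O` (always traversable, sets
the state to open), self-closing tunnel `T` (traversable exactly when open, sets closed). -/
def nSCDTrav (dO dT : Bool) : (Bool × SCDLoc) → (Bool × SCDLoc) → Prop := fun x y =>
  (x.2 = SCDLoc.O0 ∧ y = (true, SCDLoc.O1)) ∨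
  (dO = false ∧ x.2 = SCDLoc.O1 ∧ y = (true, SCDLoc.O0)) ∨
  (x.1 = true ∧ x.2 = SCDLoc.T0 ∧ y = (false, SCDLoc.T1)) ∨
  (dT = false ∧ x.1 = true ∧ x.2 = SCDLoc.T1 ∧ y = (false, SCDLoc.T0))

def nSCD (dO dT : Bool) : Gadget :=
  ⟨Bool, SCDLoc, inferInstance, inferInstance, nSCDTrav dO dT⟩

/-- Locations of an open-optional normal self-closing door. -/
inductive OOSCDLoc | O | T0 | T1
deriving DecidableEq

instance : Fintype OOSCDLoc :=
  Fintype.ofList [OOSCDLoc.O, OOSCDLoc.T0, OOSCDLoc.T1] (by intro x; cases x <;> decide)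

/-- Open-optional normal self-closing door: opening port `O` (visit sets the state to
open), self-closing tunnel `T` (traversable exactly when open, sets the state closed). -/
def ooSCDTrav (dT : Bool) : (Bool × OOSCDLoc) → (Bool × OOSCDLoc) → Prop := fun x y =>
  (x.2 = OOSCDLoc.O ∧ y = (true, OOSCDLoc.O)) ∨
  (x.1 = true ∧ x.2 = OOSCDLoc.T0 ∧ y = (false, OOSCDLoc.T1)) ∨
  (dT = false ∧ x.1 = true ∧ x.2 = OOSCDLoc.T1 ∧ y = (false, OOSCDLoc.T0))

def ooSCD (dT : Bool) : Gadget :=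
  ⟨Bool, OOSCDLoc, inferInstance, inferInstance, ooSCDTrav dT⟩

/-- Locations of a symmetric self-closing door. -/
inductive SymSCDLoc | A0 | A1 | B0 | B1
deriving DecidableEq

instance : Fintype SymSCDLoc :=
  Fintype.ofList [SymSCDLoc.A0, SymSCDLoc.A1, SymSCDLoc.B0, SymSCDLoc.B1] (by intro x; cases x <;> decide)

/-- Symmetric self-closing door: self-opening tunnel `A` (traversable exactly when closed,
sets the state open), self-closing tunnel `B` (traversable exactly when open, sets closed). -/
def symSCDTrav (dA dB : Bool) : (Bool × SymSCDLoc) → (Bool × SymSCDLoc) → Prop := fun x y =>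
  (x.1 = false ∧ x.2 = SymSCDLoc.A0 ∧ y = (true, SymSCDLoc.A1)) ∨
  (dA = false ∧ x.1 = false ∧ x.2 = SymSCDLoc.A1 ∧ y = (true, SymSCDLoc.A0)) ∨
  (x.1 = true ∧ x.2 = SymSCDLoc.B0 ∧ y = (false, SymSCDLoc.B1)) ∨
  (dB = false ∧ x.1 = true ∧ x.2 = SymSCDLoc.B1 ∧ y = (false, SymSCDLoc.B0))

def symSCD (dA dB : Bool) : Gadget :=
  ⟨Bool, SymSCDLoc, inferInstance, inferInstance, symSCDTrav dA dB⟩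

/-!
Wire the two ends of the opening tunnel of a door together. Entering the resulting loop at
either end and walking around it opens the door and returns the agent to where it came in, so
the loop behaves as an opening port; conversely, every move inside the loop either only
switches between its two ends or opens the door. Hence the map collapsing the two ends to the
port turns runs of the wired door into runs of the open-optional door, and the section sending
the port to one end lifts them back. The open-optional door simulates itself by a single copy.
-/

open Relation

theorem Relation.reflTransGen_iff_of_leftInverse {α β : Type*} {r : α → α → Prop}
    {p : β → β → Prop} {f : α → β} {g : β → α} (hfg : Function.LeftInverse f g)
    (hf : ∀ x y, r x y → ReflTransGen p (f x) (f y))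
    (hg : ∀ x y, p x y → ReflTransGen r (g x) (g y)) (x y : β) :
    ReflTransGen r (g x) (g y) ↔ ReflTransGen p x y := by
  refine ⟨fun h => ?_, fun h => ReflTransGen.lift' g hg _ _ h⟩
  simpa only [Function.onFun, hfg x, hfg y] using ReflTransGen.lift' f hf _ _ h

theorem updState_of_subsingleton {ι St : Type} [Subsingleton ι] (σg : ι → St) (i : ι) (s : St) :
    updState σg i s = fun _ => s := by
  funext j
  simp [updState, Subsingleton.elim j i]

def Gadget.travWired (G : Gadget) (c : G.Loc → G.Loc → Prop) :
    G.State × G.Loc → G.State × G.Loc → Prop :=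
  fun x y => G.trav x y ∨ x.1 = y.1 ∧ c x.2 y.2

theorem Gadget.travWired_false (G : Gadget) : G.travWired (fun _ _ => False) = G.trav := by
  funext x y
  simp [Gadget.travWired]

namespace System

abbrev single (G : Gadget) (c : G.Loc → G.Loc → Prop) (hc : ∀ a b, c a b → c b a) :
    System G where
  ι := Unit
  instFin := inferInstance
  conn x y := c x.2 y.2
  conn_symm _ _ := hc _ _

theorem single_reflTransGen_iff (G : Gadget) {c : G.Loc → G.Loc → Prop}
    (hc : ∀ a b, c a b → c b a) {s s' : G.State} {a b : G.Loc} :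
    ReflTransGen (SysStep G (single G c hc)) (fun _ => s, ((), a)) (fun _ => s', ((), b)) ↔
      ReflTransGen (G.travWired c) (s, a) (s', b) := by
  refine reflTransGen_iff_of_leftInverse
    (f := fun q : (Unit → G.State) × (Unit × G.Loc) => (q.1 (), q.2.2))
    (g := fun x : G.State × G.Loc => (fun _ => x.1, ((), x.2))) (fun _ => rfl) ?_ ?_ (s, a) (s', b)
  · rintro _ _ (@⟨σg, i, a, b, s', h⟩ | ⟨h⟩)
    · refine .single (.inl ?_)
      simpa [updState_of_subsingleton] using h
    · exact .single (.inr ⟨rfl, h⟩)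
  · rintro ⟨s, a⟩ ⟨s', b⟩ (h | ⟨rfl, h⟩)
    · have := SysStep.trav (S := single G c hc) (σg := fun _ => s) (i := ()) h
      rw [updState_of_subsingleton] at this
      exact .single this
    · exact .single (.move h)

end System

theorem Simulates.of_single {G' G : Gadget} {c : G'.Loc → G'.Loc → Prop}
    (hc : ∀ a b, c a b → c b a) {ext : G.Loc → G'.Loc} {enc : G.State → G'.State}
    (hext : Function.Injective ext) (henc : Function.Injective enc)
    (h : ∀ s s' a b, ReflTransGen (G'.travWired c) (enc s, ext a) (enc s', ext b) ↔
      ReflTransGen G.trav (s, a) (s', b)) :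
    Simulates G' G := by
  refine ⟨System.single G' c hc, fun a => ((), ext a), fun s _ => enc s, ?_, ?_, ?_⟩
  · exact fun a b hab => hext (congrArg Prod.snd hab)
  · exact fun s s' hss' => henc (congrFun hss' ())
  · intro s s' a b
    rw [System.single_reflTransGen_iff, h]

theorem Simulates.refl (G : Gadget) : Simulates G G :=
  Simulates.of_single (c := fun _ _ => False) (fun _ _ => id) Function.injective_id
    Function.injective_id fun _ _ _ _ => by rw [Gadget.travWired_false]; rfl

def DoorLoc.toODoorLoc : DoorLoc → ODoorLoc
  | .O0 | .O1 => .O | .T0 => .T0 | .T1 => .T1 | .C0 => .C0 | .C1 => .C1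

def ODoorLoc.toDoorLoc : ODoorLoc → DoorLoc
  | .O => .O0 | .T0 => .T0 | .T1 => .T1 | .C0 => .C0 | .C1 => .C1

theorem ODoorLoc.toDoorLoc_injective : Function.Injective ODoorLoc.toDoorLoc := by
  intro a b h
  cases a <;> cases b <;> first | rfl | cases h

theorem ODoorLoc.toODoorLoc_toDoorLoc (l : ODoorLoc) : l.toDoorLoc.toODoorLoc = l := by
  cases l <;> rfl

def DoorLoc.openingLoop (a b : DoorLoc) : Prop :=
  a = .O0 ∧ b = .O1 ∨ a = .O1 ∧ b = .O0

theorem DoorLoc.openingLoop_symm (a b : DoorLoc) :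
    DoorLoc.openingLoop a b → DoorLoc.openingLoop b a := by
  unfold DoorLoc.openingLoop
  tauto

section Door

variable {dO dT dC : Bool}

theorem reflTransGen_openOptDoorTrav_of_travWired {x y : Bool × DoorLoc}
    (h : (doorGadget dO dT dC).travWired DoorLoc.openingLoop x y) :
    ReflTransGen (openOptDoorTrav dT dC) (x.1, x.2.toODoorLoc) (y.1, y.2.toODoorLoc) := by
  obtain ⟨s, a⟩ := x
  obtain ⟨s', b⟩ := y
  rcases h with h | ⟨rfl, ⟨rfl, rfl⟩ | ⟨rfl, rfl⟩⟩
  · refine .single ?_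
    simp only [doorGadget, doorTrav, openOptDoorTrav, Prod.mk.injEq] at h ⊢
    rcases h with h | h | h | h | h | h <;> simp_all [DoorLoc.toODoorLoc]
  all_goals exact .refl

theorem reflTransGen_travWired_of_openOptDoorTrav {x y : Bool × ODoorLoc}
    (h : openOptDoorTrav dT dC x y) :
    ReflTransGen ((doorGadget dO dT dC).travWired DoorLoc.openingLoop)
      (x.1, x.2.toDoorLoc) (y.1, y.2.toDoorLoc) := by
  obtain ⟨s, a⟩ := x
  obtain ⟨s', b⟩ := y
  rcases h with ⟨rfl, h⟩ | h
  · obtain ⟨rfl, rfl⟩ := Prod.mk.inj h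
    exact .tail (.single (.inl (.inl ⟨rfl, rfl⟩))) (.inr ⟨rfl, .inr ⟨rfl, rfl⟩⟩)
  · refine .single (.inl ?_)
    simp only [doorGadget, doorTrav, Prod.mk.injEq] at h ⊢
    rcases h with h | h | h | h <;> simp_all [ODoorLoc.toDoorLoc]

theorem doorGadget_simulates_openOptDoorGadget :
    Simulates (doorGadget dO dT dC) (openOptDoorGadget dT dC) :=
  Simulates.of_single DoorLoc.openingLoop_symm ODoorLoc.toDoorLoc_injective
    Function.injective_id fun s s' a b =>
      reflTransGen_iff_of_leftInverse (r := (doorGadget dO dT dC).travWired DoorLoc.openingLoop)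
        (f := Prod.map id DoorLoc.toODoorLoc) (g := Prod.map id ODoorLoc.toDoorLoc)
        (fun x => Prod.ext rfl x.2.toODoorLoc_toDoorLoc)
        (fun _ _ => reflTransGen_openOptDoorTrav_of_travWired)
        (fun _ _ => reflTransGen_travWired_of_openOptDoorTrav) (s, a) (s', b)

end Door

/-- Every door gadget (whether its opening mechanism is a tunnel or a
port, and whether each tunnel is directed or undirected) can simulate its corresponding
open-optional door, obtained by replacing the opening tunnel with a single opening port. -/
theorem every_door_simulates_its_open_optional_door :
    (∀ dO dT dC : Bool, Simulates (doorGadget dO dT dC) (openOptDoorGadget dT dC)) ∧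
    (∀ dT dC : Bool, Simulates (openOptDoorGadget dT dC) (openOptDoorGadget dT dC)) :=
  ⟨fun _ _ _ => doorGadget_simulates_openOptDoorGadget, fun _ _ => Simulates.refl _⟩
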